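/- Let K be a group, K⁰ ⊴ K a normal subgroup with K/K⁰ finite abelian, and let B be a ℂ-representation of K which as a K⁰-representation decomposes as B = ⊕_{ε ∈ K/K⁰} ε·B⁰, where B⁰ is an irreducible K⁰-subrepresentation and the ε·B⁰ are permuted simply transitively by K/K⁰. Then for every character χ of K, the space of K-equivariant maps Hom_K(B, χ) has dimension at most 1, provided Hom_{K⁰}(B⁰, χ|_{K⁰}) has dimension at most 1. -/
import Mathlib


/-- Bottom-layer multiplicity one: if `B = ⊕_{ε ∈ K/K⁰} ε·B⁰` with `B⁰` an
irreducible `K⁰`-subrepresentation whose translates are permuted simply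
transitively by the finite abelian quotient `K/K⁰`, and if the space of
`K⁰`-equivariant functionals `B⁰ → χ|_{K⁰}` is at most one-dimensional, then
the space of `K`-equivariant functionals `B → χ` is at most one-dimensional. -/
theorem stmt_16 {K B : Type*} [Group K] [AddCommGroup B] [Module ℂ B]
    (ρ : Representation ℂ K B) (K0 : Subgroup K) [K0.Normal] [Finite (K ⧸ K0)]
    (habel : ∀ a b : K ⧸ K0, a * b = b * a)
    (B0 : Submodule ℂ B)
    (hB0inv : ∀ g ∈ K0, ∀ b ∈ B0, ρ g b ∈ B0)
    (hB0ne : B0 ≠ ⊥)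
    (hirr : ∀ C : Submodule ℂ B, C ≤ B0 → (∀ g ∈ K0, ∀ b ∈ C, ρ g b ∈ C) →
      C = ⊥ ∨ C = B0)
    (hperm : ∀ g h : K, g⁻¹ * h ∈ K0 ↔ B0.map (ρ g) = B0.map (ρ h))
    (hsum : ⨆ g : K, B0.map (ρ g) = ⊤)
    (hindep : sSupIndep (Set.range fun g : K => B0.map (ρ g)))
    (χ : K →* ℂˣ)
    (hres : ∀ f₁ f₂ : ↥B0 →ₗ[ℂ] ℂ,
      (∀ (g : K) (hg : g ∈ K0) (b : ↥B0),
        f₁ ⟨ρ g ↑b, hB0inv g hg ↑b b.2⟩ = (χ g : ℂ) * f₁ b) →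
      (∀ (g : K) (hg : g ∈ K0) (b : ↥B0),
        f₂ ⟨ρ g ↑b, hB0inv g hg ↑b b.2⟩ = (χ g : ℂ) * f₂ b) →
      ∃ c₁ c₂ : ℂ, (c₁, c₂) ≠ (0, 0) ∧ c₁ • f₁ = c₂ • f₂) :
    ∀ f₁ f₂ : B →ₗ[ℂ] ℂ,
      (∀ (g : K) (b : B), f₁ (ρ g b) = (χ g : ℂ) * f₁ b) →
      (∀ (g : K) (b : B), f₂ (ρ g b) = (χ g : ℂ) * f₂ b) →
      ∃ c₁ c₂ : ℂ, (c₁, c₂) ≠ (0, 0) ∧ c₁ • f₁ = c₂ • f₂ := by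
  intro f₁ f₂ h₁ h₂
  obtain ⟨c₁, c₂, hc, hprop⟩ := hres (f₁.comp B0.subtype) (f₂.comp B0.subtype)
    (fun g hg b => h₁ g b) (fun g hg b => h₂ g b)
  refine ⟨c₁, c₂, hc, ?_⟩
  have hker : (⊤ : Submodule ℂ B) ≤ LinearMap.ker (c₁ • f₁ - c₂ • f₂) := by
    rw [← hsum]
    refine iSup_le fun g => ?_
    rintro x ⟨b, hb, rfl⟩
    have := congrArg (fun f => f ⟨b, hb⟩) hprop
    simp only [LinearMap.smul_apply, LinearMap.comp_apply, Submodule.subtype_apply] at this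
    simp [LinearMap.mem_ker, h₁ g b, h₂ g b, smul_eq_mul]
    rw [smul_eq_mul, smul_eq_mul] at this
    linear_combination (χ g : ℂ) * this
  ext b
  have := hker (Submodule.mem_top (x := b))
  simpa [sub_eq_zero] using this
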